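/- Let G be a finite simple d-regular graph with d ≥ 8 that contains no quadrangle (no cycle of length 4). Then G is completely hyperenergetic: E_G(v) ≥ 2 for every vertex v of G. -/

import Mathlib

/-!
Let `B = |A|`, so that `B ^ 2 = A ^ 2`. By Cauchy–Schwarz, the diagonal moments `k ↦ (B ^ k) v v`
of the positive semidefinite matrix `B` are log-convex, whence `(B ^ 2) v v ^ 3 ≤ E(v) ^ 2 (B ^ 4) v v`.
For a `d`-regular graph `(A ^ 2) v v = d`, and without quadrangles two distinct vertices have at
most one common neighbour, so `(A ^ 4) v v = ∑ w, (A ^ 2) v w ^ 2 ≤ d ^ 2 + (d ^ 2 - d)`.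
Hence `E(v) ^ 2 ≥ d ^ 2 / (2 d - 1)`, which is at least `4` once `d ≥ 8`.
-/

open Matrix Finset

/-- The energy of the vertex `i` of a finite simple graph `G`:
the `(i,i)` entry of `|A| = (A Aᴴ)^{1/2}`, where `A` is the adjacency matrix. -/
noncomputable def vertexEnergy {n : ℕ} (G : SimpleGraph (Fin n)) [DecidableRel G.Adj]
    (i : Fin n) : ℝ :=
  ((Matrix.posSemidef_self_mul_conjTranspose (G.adjMatrix ℝ)).1.eigenvectorUnitary.1 *
    diagonal ((√·) ∘ (Matrix.posSemidef_self_mul_conjTranspose (G.adjMatrix ℝ)).1.eigenvalues) *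
    (star (Matrix.posSemidef_self_mul_conjTranspose (G.adjMatrix ℝ)).1.eigenvectorUnitary :
      Matrix (Fin n) (Fin n) ℝ)) i i

open scoped MatrixOrder

namespace Matrix.PosSemidef

variable {n : Type*} [Fintype n]

lemma spectral_sqrt_eq_cfcSqrt [DecidableEq n] {M : Matrix n n ℝ} (hM : M.PosSemidef) :
    hM.1.eigenvectorUnitary.1 * diagonal ((√·) ∘ hM.1.eigenvalues) *
      (star hM.1.eigenvectorUnitary : Matrix n n ℝ) = CFC.sqrt M := by
  rw [CFC.sqrt_eq_real_sqrt M hM.nonneg, cfcₙ_eq_cfc, hM.1.cfc_eq, IsHermitian.cfc,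
    Unitary.conjStarAlgAut_apply]
  rfl

lemma sq_dotProduct_mulVec_le {P : Matrix n n ℝ} (hP : P.PosSemidef) (x y : n → ℝ) :
    (x ⬝ᵥ P *ᵥ y) ^ 2 ≤ (x ⬝ᵥ P *ᵥ x) * (y ⬝ᵥ P *ᵥ y) := by
  classical
  obtain ⟨R, rfl⟩ := CStarAlgebra.nonneg_iff_eq_star_mul_self.mp hP.nonneg
  simp only [← mulVec_mulVec, dotProduct_mulVec _ _ (R *ᵥ _), star_eq_conjTranspose,
    conjTranspose_eq_transpose_of_trivial, vecMul_transpose]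
  simpa only [dotProduct, pow_two] using sum_mul_sq_le_sq_mul_sq univ (R *ᵥ x) (R *ᵥ y)

lemma sq_transpose_mul_mul_apply_le {P : Matrix n n ℝ} (hP : P.PosSemidef)
    (X Y : Matrix n n ℝ) (v : n) :
    (Xᵀ * P * Y) v v ^ 2 ≤ (Xᵀ * P * X) v v * (Yᵀ * P * Y) v v := by
  have hcol : ∀ X Y : Matrix n n ℝ, (Xᵀ * P * Y) v v = (X · v) ⬝ᵥ P *ᵥ (Y · v) := by
    intro X Y
    rw [Matrix.mul_assoc, mul_apply']
    rfl
  simpa only [hcol] using hP.sq_dotProduct_mulVec_le _ _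

variable [DecidableEq n] {B : Matrix n n ℝ}

lemma sq_pow_succ_apply_le (hB : B.PosSemidef) (m : ℕ) (v : n) :
    (B ^ (m + 1)) v v ^ 2 ≤ (B ^ m) v v * (B ^ (m + 2)) v v := by
  have hT : ∀ k : ℕ, (B ^ k)ᵀ = B ^ k := fun k => by
    rw [transpose_pow, ← conjTranspose_eq_transpose_of_trivial, hB.1.eq]
  -- Cauchy–Schwarz for the columns `v` of `B ^ i` and `B ^ (i + 1)`, paired by `1` if `m = 2 i`
  -- and by `B` if `m = 2 i + 1`
  obtain ⟨i, rfl | rfl⟩ := Nat.even_or_odd' m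
  · have h := PosSemidef.one.sq_transpose_mul_mul_apply_le (B ^ i) (B ^ (i + 1)) v
    simp only [hT, Matrix.mul_one, ← pow_add] at h
    convert h using 3 <;> ring
  · have h := hB.sq_transpose_mul_mul_apply_le (B ^ i) (B ^ (i + 1)) v
    simp only [hT, ← pow_succ, ← pow_add] at h
    convert h using 3 <;> ring

lemma pow_two_apply_cube_le (hB : B.PosSemidef) (v : n) :
    (B ^ 2) v v ^ 3 ≤ B v v ^ 2 * (B ^ 4) v v := by
  have h1 : (B ^ 2) v v ^ 2 ≤ B v v * (B ^ 3) v v := by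
    simpa using hB.sq_pow_succ_apply_le 1 v
  have h2 : (B ^ 3) v v ^ 2 ≤ (B ^ 2) v v * (B ^ 4) v v := hB.sq_pow_succ_apply_le 2 v
  have h4 : 0 ≤ (B ^ 4) v v := (hB.pow 4).diag_nonneg
  rcases (hB.pow 2).diag_nonneg.eq_or_lt with h0 | hpos
  · rw [← h0, zero_pow three_ne_zero]
    exact mul_nonneg (sq_nonneg _) h4
  have : (B ^ 2) v v * (B ^ 2) v v ^ 3 ≤ (B ^ 2) v v * (B v v ^ 2 * (B ^ 4) v v) :=
    calc (B ^ 2) v v * (B ^ 2) v v ^ 3 = ((B ^ 2) v v ^ 2) ^ 2 := by ring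
      _ ≤ (B v v * (B ^ 3) v v) ^ 2 := pow_le_pow_left₀ (sq_nonneg _) h1 2
      _ = B v v ^ 2 * (B ^ 3) v v ^ 2 := by ring
      _ ≤ B v v ^ 2 * ((B ^ 2) v v * (B ^ 4) v v) := by gcongr
      _ = _ := by ring
  exact le_of_mul_le_mul_left this hpos

end Matrix.PosSemidef

namespace SimpleGraph

variable {V : Type*} [Fintype V] (G : SimpleGraph V) [DecidableRel G.Adj]

lemma adjMatrix_mul_self_apply {α : Type*} [NonAssocSemiring α] (u w : V) :
    (G.adjMatrix α * G.adjMatrix α) u w = #{x ∈ G.neighborFinset u | G.Adj x w} := by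
  rw [adjMatrix_mul_apply]
  simp only [adjMatrix_apply, sum_boole]

lemma adjMatrix_mul_self_apply_le_one {α : Type*} [Semiring α] [PartialOrder α]
    [IsStrictOrderedRing α]
    (hquad : ∀ a b c e : V, G.Adj a b → G.Adj b c → G.Adj c e → G.Adj e a → a = c ∨ b = e)
    {u w : V} (huw : u ≠ w) : (G.adjMatrix α * G.adjMatrix α) u w ≤ 1 := by
  rw [adjMatrix_mul_self_apply, Nat.cast_le_one, card_le_one]
  intro b hb e he
  simp only [mem_filter, mem_neighborFinset] at hb he
  exact (hquad u b w e hb.1 hb.2 he.2.symm he.1.symm).resolve_left huw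

lemma sum_adjMatrix_mul_self_apply {d : ℕ} (hreg : G.IsRegularOfDegree d) (v : V) :
    ∑ w, (G.adjMatrix ℝ * G.adjMatrix ℝ) v w = (d : ℝ) ^ 2 := by
  have hconst : G.adjMatrix ℝ *ᵥ Function.const V 1 = Function.const V (d : ℝ) := by
    ext u
    exact (adjMatrix_mulVec_const_apply_of_regular hreg).trans (mul_one _)
  have := congrFun (congrArg (G.adjMatrix ℝ *ᵥ ·) hconst) v
  simp only [mulVec_mulVec, adjMatrix_mulVec_const_apply_of_regular hreg] at this
  simpa [mulVec, dotProduct, sq] using this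

variable [DecidableEq V]

lemma adjMatrix_pow_four_apply_self_le {d : ℕ} (hreg : G.IsRegularOfDegree d)
    (hquad : ∀ a b c e : V, G.Adj a b → G.Adj b c → G.Adj c e → G.Adj e a → a = c ∨ b = e)
    (v : V) : (G.adjMatrix ℝ ^ 4) v v ≤ 2 * (d : ℝ) ^ 2 - d := by
  set M := G.adjMatrix ℝ * G.adjMatrix ℝ with hM
  have hMsymm : ∀ w, M w v = M v w := fun w => by
    rw [← transpose_apply M, hM, transpose_mul, transpose_adjMatrix]
  have h4 : (G.adjMatrix ℝ ^ 4) v v = ∑ w, M v w ^ 2 := by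
    rw [show 4 = 2 * 2 from rfl, pow_mul, sq, sq, ← hM, mul_apply]
    simp only [hMsymm, sq]
  have hvv : M v v = d := by rw [hM, adjMatrix_mul_self_apply_self, hreg v]
  have hoff : ∑ w ∈ univ.erase v, M v w ^ 2 ≤ ∑ w ∈ univ.erase v, M v w := by
    refine sum_le_sum fun w hw => ?_
    have h0 : 0 ≤ M v w := by rw [hM, adjMatrix_mul_self_apply]; positivity
    have h1 := G.adjMatrix_mul_self_apply_le_one (α := ℝ) hquad (ne_of_mem_erase hw).symm
    nlinarith
  have hrow : ∑ w, M v w = (d : ℝ) ^ 2 := G.sum_adjMatrix_mul_self_apply hreg v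
  rw [← add_sum_erase _ _ (mem_univ v), hvv] at hrow
  rw [h4, ← add_sum_erase _ _ (mem_univ v), hvv]
  linarith

end SimpleGraph

theorem stmt_11 {n : ℕ} (G : SimpleGraph (Fin n)) [DecidableRel G.Adj]
    (d : ℕ) (hreg : G.IsRegularOfDegree d) (hd : 8 ≤ d)
    (hquad : ∀ a b c e : Fin n,
      G.Adj a b → G.Adj b c → G.Adj c e → G.Adj e a → a = c ∨ b = e) :
    ∀ v : Fin n, 2 ≤ vertexEnergy G v := by
  intro v
  set A := G.adjMatrix ℝ
  have hAA := posSemidef_self_mul_conjTranspose A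
  set B := CFC.sqrt (A * Aᴴ)
  have hB : B.PosSemidef := (CFC.sqrt_nonneg _).posSemidef
  have hE : vertexEnergy G v = B v v := by
    rw [vertexEnergy, hAA.spectral_sqrt_eq_cfcSqrt]
  have hB2 : B ^ 2 = A ^ 2 := by
    rw [sq, CFC.sqrt_mul_sqrt_self _ hAA.nonneg, (G.isHermitian_adjMatrix ℝ).eq, sq]
  have hB4 : B ^ 4 = A ^ 4 := by rw [show 4 = 2 * 2 from rfl, pow_mul, hB2, ← pow_mul]
  have hA2 : (A ^ 2) v v = d := by rw [sq, SimpleGraph.adjMatrix_mul_self_apply_self, hreg v]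
  have hcube : (d : ℝ) ^ 3 ≤ vertexEnergy G v ^ 2 * (2 * (d : ℝ) ^ 2 - d) := by
    have h := hB.pow_two_apply_cube_le v
    rw [hB2, hB4, hA2, ← hE] at h
    exact h.trans (by gcongr; exact G.adjMatrix_pow_four_apply_self_le hreg hquad v)
  have hd' : (8 : ℝ) ≤ d := by exact_mod_cast hd
  have hE0 : 0 ≤ vertexEnergy G v := hE ▸ hB.diag_nonneg
  by_contra! hlt
  have hsq : vertexEnergy G v ^ 2 ≤ 4 := by nlinarith
  nlinarith [mul_le_mul_of_nonneg_right hsq (by nlinarith : (0 : ℝ) ≤ 2 * (d : ℝ) ^ 2 - d)]
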